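/- Let $\kappa \geq 1$, and for each class $k \in \{1,\dots,\kappa\}$ let $f_k : \mathcal{X} \to \mathbb{R}$ and $b_k \in \mathbb{R}$. Fix points $\bar{x}, \underline{x} \in \mathcal{X}$ and a label $y \in \{1,\dots,\kappa\}$. Then the pair of constraints (for all $k$): $(f_y(\bar{x}) - f_k(\bar{x})) + (b_y - b_k) + 1_{y=k} \geq 1$ and $(f_y(\underline{x}) - f_k(\underline{x})) + (b_y - b_k) + 1_{y=k} \geq 1$ holds if and only if for all pairs $(\bar{k}, \underline{k}) \in \{1,\dots,\kappa\}^2$: $(f_y(\bar{x}) + f_y(\underline{x}) - f_{\bar{k}}(\bar{x}) - f_{\underline{k}}(\underline{x})) + (2b_y - b_{\bar{k}} - b_{\underline{k}}) + 1_{y=\bar{k}=\underline{k}} \geq 1$. -/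
import Mathlib


theorem stmt_0 {X : Type*} (κ : ℕ) (hκ : 1 ≤ κ)
    (f : Fin κ → X → ℝ) (b : Fin κ → ℝ) (xb xu : X) (y : Fin κ) :
    ((∀ k : Fin κ,
        (f y xb - f k xb) + (b y - b k) + (if y = k then (1:ℝ) else 0) ≥ 1 ∧
        (f y xu - f k xu) + (b y - b k) + (if y = k then (1:ℝ) else 0) ≥ 1)
      ↔
      (∀ kb ku : Fin κ,
        (f y xb + f y xu - f kb xb - f ku xu) + (2 * b y - b kb - b ku)
          + (if y = kb ∧ y = ku then (1:ℝ) else 0) ≥ 1)) := by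
  constructor
  · intro h kb ku
    have hb := (h kb).1
    have hu := (h ku).2
    by_cases h1 : y = kb
    · by_cases h2 : y = ku
      · subst h1; subst h2
        rw [if_pos ⟨rfl, rfl⟩]
        linarith
      · rw [if_neg (by tauto)]
        rw [if_neg h2] at hu
        subst h1
        rw [if_pos rfl] at hb
        linarith
    · rw [if_neg (by tauto)]
      rw [if_neg h1] at hb
      by_cases h2 : y = ku
      · subst h2
        rw [if_pos rfl] at hu
        linarith
      · rw [if_neg h2] at hu
        linarith
  · intro h k
    have h1 := h k y
    have h2 := h y k
    by_cases hy : y = k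
    · subst hy
      rw [if_pos rfl]
      constructor <;> linarith
    · rw [if_neg hy]
      rw [if_neg (by tauto)] at h1
      rw [if_neg (by tauto)] at h2
      constructor <;> linarith
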